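/- arXiv:2008.05288 — 2 statements merged into one kernel-verified Lean document; each statement's English description precedes it below -/
import Mathlib

section
/- Let $\overline{M}=(M_1\times_f M_2)\times_h I$ be a sequential standard static space-time which is a manifold of quasi-constant curvature with associated functions $a,b$ ($b\neq0$) and generator $U=U_1+\partial_t$. If the Hessians satisfy $H_1^f(X_1,Y_1)=af\,g_1(X_1,Y_1)+bf\,g_1(X_1,U_1)g_1(Y_1,U_1)$ and $H^h(X_1,Y_1)=(-a+h^2)h\,g_1(X_1,Y_1)-bh\,g_1(X_1,U_1)g_1(Y_1,U_1)$, then $(M_1,g_1)$ is quasi-Einstein with $Ric^1=(\alpha+(m_2-1)a+h^2)g_1+(\beta+(m_2-1)b)\,g_1(\cdot,U_1)\otimes g_1(\cdot,U_1)$. -/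
/-- Abstract pointwise model of a (pseudo-)Riemannian manifold: a type of points,
a type of (smooth) vector fields with its module operations, the action of vector
fields on functions, Lie bracket, metric, Levi-Civita connection, Ricci tensor,
scalar curvature, gradient, Laplacian, Hessian and a (pseudo-)orthonormal frame. -/
structure GeomData (Pt : Type) where
  V : Type
  dim : ℕ
  vzero : V
  vadd : V → V → V
  vneg : V → V
  smul : (Pt → ℝ) → V → V
  act : V → (Pt → ℝ) → (Pt → ℝ)
  bracket : V → V → V
  g : V → V → (Pt → ℝ)
  conn : V → V → V
  ric : V → V → (Pt → ℝ)
  scal : Pt → ℝ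
  grad : (Pt → ℝ) → V
  lap : (Pt → ℝ) → (Pt → ℝ)
  hess : (Pt → ℝ) → V → V → (Pt → ℝ)
  frame : Fin dim → V
  sgn : Fin dim → ℝ
  sgn_pm : ∀ i, sgn i = 1 ∨ sgn i = -1
  g_symm : ∀ X Y, g X Y = g Y X
  g_addl : ∀ X Y Z, g (vadd X Y) Z = fun p => g X Z p + g Y Z p
  g_negl : ∀ X Y, g (vneg X) Y = fun p => -(g X Y p)
  g_smull : ∀ (φ : Pt → ℝ) X Y, g (smul φ X) Y = fun p => φ p * g X Y p
  act_add : ∀ X φ ψ, act X (fun p => φ p + ψ p) = fun p => act X φ p + act X ψ p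
  act_mul : ∀ X φ ψ, act X (fun p => φ p * ψ p) =
      fun p => φ p * act X ψ p + ψ p * act X φ p
  act_const : ∀ X (c : ℝ), act X (fun _ => c) = fun _ => 0
  compat : ∀ X Y Z, act X (g Y Z) = fun p => g (conn X Y) Z p + g Y (conn X Z) p
  torsion_free : ∀ X Y, vadd (conn X Y) (vneg (conn Y X)) = bracket X Y
  nondeg : ∀ X, (∀ Y, g X Y = fun _ => 0) → X = vzero
  grad_def : ∀ φ X, g (grad φ) X = act X φ
  hess_def : ∀ φ X Y, hess φ X Y = g (conn X (grad φ)) Y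
  frame_orthonormal : ∀ i j, g (frame i) (frame j) = fun _ => if i = j then sgn i else 0
  frame_complete : ∀ X Y p, (∑ i, sgn i * (g X (frame i) p * g Y (frame i) p)) = g X Y p
  scal_def : ∀ p, scal p = ∑ i, sgn i * ric (frame i) (frame i) p
  lap_def : ∀ φ p, lap φ p = ∑ i, sgn i * hess φ (frame i) (frame i) p

/-- For a sequential standard static space-time
`M̄ = (M₁ ×_f M₂) ×_h I` of quasi-constant curvature (hence quasi-Einstein,
`R̄ic = α ḡ + β A ⊗ A`) with generator `U = U₁ + ∂t`, if the Hessians satisfy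
`H₁^f(X₁,Y₁) = a f g₁(X₁,Y₁) + b f g₁(X₁,U₁)g₁(Y₁,U₁)` and
`H^h(X₁,Y₁) = (-a+h²) h g₁(X₁,Y₁) - b h g₁(X₁,U₁)g₁(Y₁,U₁)`, then `(M₁,g₁)`
is quasi-Einstein:
`Ric¹ = (α+(m₂-1)a+h²) g₁ + (β+(m₂-1)b) g₁(·,U₁) ⊗ g₁(·,U₁)`.
The Ricci formula `R̄ic(X₁,Y₁) = Ric¹(X₁,Y₁) - (m₂/f)H₁^f - (1/h)H^h` is
assumed as the hypothesis `hRic11`. -/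
theorem seqStandardStatic_base_quasiEinstein
    {M1 M2 Iv : Type} [Nonempty Iv]
    (G1 : GeomData M1) (G12 : GeomData (M1 × M2))
    (Gb : GeomData (M1 × M2 × Iv))
    (f : M1 → ℝ) (h : M1 × M2 → ℝ)
    (hf : ∀ x, 0 < f x) (hh : ∀ q, 0 < h q)
    (m2 : ℕ)
    (lift1 : G1.V → Gb.V) (j1 : G1.V → G12.V) (dt : Gb.V)
    (g11 : ∀ X Y (p : M1 × M2 × Iv), Gb.g (lift1 X) (lift1 Y) p = G1.g X Y p.1)
    (g_t1 : ∀ X, Gb.g (lift1 X) dt = fun _ => 0)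
    (α β : ℝ) (hβ : β ≠ 0)
    (U : Gb.V) (U1 : G1.V) (hU : U = Gb.vadd (lift1 U1) dt)
    (hUnit : ∀ p, Gb.g U U p = 1)
    (hQE : ∀ X Y p, Gb.ric X Y p
      = α * Gb.g X Y p + β * (Gb.g X U p * Gb.g Y U p))
    (hRic11 : ∀ (X1 Y1 : G1.V) (p : M1 × M2 × Iv),
      Gb.ric (lift1 X1) (lift1 Y1) p
        = G1.ric X1 Y1 p.1
          - ((m2 : ℝ) / f p.1) * G1.hess f X1 Y1 p.1
          - (1 / h (p.1, p.2.1)) * G12.hess h (j1 X1) (j1 Y1) (p.1, p.2.1))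
    (a b : M1 × M2 × Iv → ℝ) (hb : b ≠ 0)
    (hHf : ∀ (X1 Y1 : G1.V) (p : M1 × M2 × Iv),
      G1.hess f X1 Y1 p.1
        = a p * f p.1 * G1.g X1 Y1 p.1
          + b p * f p.1 * (G1.g X1 U1 p.1 * G1.g Y1 U1 p.1))
    (hHh : ∀ (X1 Y1 : G1.V) (p : M1 × M2 × Iv),
      G12.hess h (j1 X1) (j1 Y1) (p.1, p.2.1)
        = (-(a p) + (h (p.1, p.2.1))^2) * h (p.1, p.2.1) * G1.g X1 Y1 p.1
          - b p * h (p.1, p.2.1) * (G1.g X1 U1 p.1 * G1.g Y1 U1 p.1)) :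
    ∀ (X1 Y1 : G1.V) (p : M1 × M2 × Iv),
      G1.ric X1 Y1 p.1
        = (α + ((m2 : ℝ) - 1) * a p + (h (p.1, p.2.1))^2) * G1.g X1 Y1 p.1
          + (β + ((m2 : ℝ) - 1) * b p)
              * (G1.g X1 U1 p.1 * G1.g Y1 U1 p.1) := by
  intro X1 Y1 p
  have hgU : ∀ (X : G1.V), Gb.g (lift1 X) U p = G1.g X U1 p.1 := by
    intro X
    rw [hU, Gb.g_symm, Gb.g_addl]
    simp only [g_t1, Gb.g_symm _ (lift1 X), g11]
    simp [G1.g_symm]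
  have h1 := hRic11 X1 Y1 p
  rw [hQE, g11, hgU, hgU, hHf, hHh] at h1
  have hf' : f p.1 ≠ 0 := (hf p.1).ne'
  have hh' : h (p.1, p.2.1) ≠ 0 := (hh _).ne'
  have h2 : G1.ric X1 Y1 p.1 = α * G1.g X1 Y1 p.1 + β * (G1.g X1 U1 p.1 * G1.g Y1 U1 p.1)
      + ((m2 : ℝ) / f p.1) * (a p * f p.1 * G1.g X1 Y1 p.1
          + b p * f p.1 * (G1.g X1 U1 p.1 * G1.g Y1 U1 p.1))
      + (1 / h (p.1, p.2.1)) * ((-(a p) + (h (p.1, p.2.1))^2) * h (p.1, p.2.1) * G1.g X1 Y1 p.1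
          - b p * h (p.1, p.2.1) * (G1.g X1 U1 p.1 * G1.g Y1 U1 p.1)) := by
    linarith [h1]
  rw [h2]
  field_simp
  ring
end

section
/- Let $\overline{M}=(I\times_f M_2)\times_h M_3$ be a sequential generalized Robertson-Walker space-time which is quasi-Einstein with $\overline{Ric}=\alpha\overline{g}+\beta A\otimes A$ and $U=\partial_t+U_2$. Then $(M_3,g_3)$ is an Einstein manifold with $Ric^3=\big(\alpha h^2+h\Delta h+(m_3-1)\|\mathrm{grad}\,h\|^2\big)g_3$. -/
/-- For a sequential generalized Robertson–Walker space-time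
`M̄ = (I ×_f M₂) ×_h M₃` which is quasi-Einstein with `R̄ic = α ḡ + β A ⊗ A`
and `U = ∂t + U₂`, the fiber `(M₃,g₃)` is Einstein:
`Ric³ = (α h² + hΔh + (m₃-1)‖grad h‖²) g₃`, where `Δh`, `grad h` are on
`I ×_f M₂`.  The De–Shenawy–Ünal Ricci formula on the third factor and the
warped metric relations are hypotheses. -/
theorem seqGRW_fiber_Einstein
    {M2 M3 : Type}
    (G2 : GeomData M2) (G3 : GeomData M3) (G12 : GeomData (ℝ × M2))
    (Gb : GeomData (ℝ × M2 × M3))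
    (f : ℝ → ℝ) (h : ℝ × M2 → ℝ)
    (hf : ∀ t, 0 < f t) (hh : ∀ q, 0 < h q)
    (lift2 : G2.V → Gb.V) (lift3 : G3.V → Gb.V) (dt : Gb.V)
    (g_tt : ∀ p : ℝ × M2 × M3, Gb.g dt dt p = -1)
    (g33 : ∀ X Y (p : ℝ × M2 × M3),
      Gb.g (lift3 X) (lift3 Y) p = (h (p.1, p.2.1))^2 * G3.g X Y p.2.2)
    (g_t3 : ∀ X, Gb.g (lift3 X) dt = fun _ => 0)
    (g_23 : ∀ X Y, Gb.g (lift2 X) (lift3 Y) = fun _ => 0)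
    (α β : ℝ) (hβ : β ≠ 0)
    (U : Gb.V) (U2 : G2.V) (hU : U = Gb.vadd dt (lift2 U2))
    (hUnit : ∀ p, Gb.g U U p = 1)
    (hQE : ∀ X Y p, Gb.ric X Y p
      = α * Gb.g X Y p + β * (Gb.g X U p * Gb.g Y U p))
    (hRic33 : ∀ (X3 Y3 : G3.V) (p : ℝ × M2 × M3),
      Gb.ric (lift3 X3) (lift3 Y3) p
        = G3.ric X3 Y3 p.2.2
          - (h (p.1, p.2.1) * G12.lap h (p.1, p.2.1)
              + ((G3.dim : ℝ) - 1)
                * G12.g (G12.grad h) (G12.grad h) (p.1, p.2.1))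
            * G3.g X3 Y3 p.2.2) :
    ∀ (X3 Y3 : G3.V) (p : ℝ × M2 × M3),
      G3.ric X3 Y3 p.2.2
        = (α * (h (p.1, p.2.1))^2
            + h (p.1, p.2.1) * G12.lap h (p.1, p.2.1)
            + ((G3.dim : ℝ) - 1)
                * G12.g (G12.grad h) (G12.grad h) (p.1, p.2.1))
            * G3.g X3 Y3 p.2.2 := by
  intro X3 Y3 p
  have hU3 : Gb.g (lift3 X3) U p = 0 := by
    have h1 := congrFun (Gb.g_symm (lift3 X3) U) p
    rw [hU] at h1
    have h2 := congrFun (Gb.g_addl dt (lift2 U2) (lift3 X3)) p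
    have h3 := congrFun (Gb.g_symm (lift3 X3) dt) p
    have h4 := congrFun (g_t3 X3) p
    have h5 := congrFun (g_23 U2 X3) p
    have h6 := congrFun (Gb.g_symm (lift2 U2) (lift3 X3)) p
    rw [hU]
    linarith
  have hq := hQE (lift3 X3) (lift3 Y3) p
  have hU3' : Gb.g (lift3 Y3) U p = 0 := by
    have h1 := congrFun (Gb.g_symm (lift3 Y3) U) p
    rw [hU] at h1
    have h2 := congrFun (Gb.g_addl dt (lift2 U2) (lift3 Y3)) p
    have h3 := congrFun (Gb.g_symm (lift3 Y3) dt) p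
    have h4 := congrFun (g_t3 Y3) p
    have h5 := congrFun (g_23 U2 Y3) p
    have h6 := congrFun (Gb.g_symm (lift2 U2) (lift3 Y3)) p
    rw [hU]
    linarith
  rw [hU3, hU3', g33, hRic33] at hq
  simp only [mul_zero, zero_mul, add_zero] at hq
  linarith [hq]
end
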